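/- Let N = {1,...,d}, fix i ∈ N, and let ω : P(N) × Sym(N) → ℝ. Define γ̄_i(ω) = Σ_{S ⊆ N, i ∈ S} Σ_{σ ∈ Sym(N)} [(|S|−1)!(d−|S|)!/(d!·d!)]·[ω(S,σ) − ω(S\{i},σ)]. If ω(S,σ) depends on σ only through the relative order it induces on S (i.e., ω(S,σ) = ω(S,σ') whenever σ and σ' induce the same relative ordering of S), then γ̄_i(ω) = Σ_{S ⊆ N\{i}} Σ_{π ∈ Ord(S∪{i})} [(d−|S|−1)!/(d!(|S|+1))]·[ω̃(π) − ω̃(π with i removed)], where ω̃(π) is the common value of ω(T, σ) over all σ ∈ Sym(N) inducing π on T = underlying set of π. -/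

import Mathlib

open Finset Nat

/-- The set of orderings of a finite set `S`: lists that enumerate `S` without repetition. -/
def Orderings (S : Finset ℕ) : Finset (List ℕ) := (S.sort (· ≤ ·)).permutations.toFinset

/-- A canonical extension of an ordering `π` of a subset of `{1,…,d}` to an ordering
of all of `{1,…,d}`, obtained by appending the remaining elements in increasing order. -/
def extendOrd (d : ℕ) (π : List ℕ) : List ℕ :=
  π ++ ((Finset.Icc 1 d \ π.toFinset).sort (· ≤ ·))

/-!
Restricting orderings of `N` to a subset `T` maps `Ord(N)` onto `Ord(T)`, and all fibres have
the same size `|N|! / |T|!`: a permutation of `T` carrying `π` to `π'`, applied letterwise,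
is a bijection between the fibres over `π` and `π'`. Hence summing a function of the induced
order on `S` over `Sym(N)` gives `d! / |S|!` times the sum over `Ord(S)`. Both terms of
`ω(S,σ) - ω(S \ {i},σ)` are functions of the order `π` induced on `S`, the second through
`π` with `i` removed; reindexing by `S = S' ∪ {i}` turns the coefficient
`(|S|-1)! (d-|S|)! / (d! d!) · d! / |S|!` into `(d-|S'|-1)! / (d! (|S'|+1))`.
-/

lemma mem_orderings {S : Finset ℕ} {l : List ℕ} :
    l ∈ Orderings S ↔ l.Nodup ∧ l.toFinset = S := by
  rw [Orderings, List.mem_toFinset, List.mem_permutations]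
  refine ⟨fun h => ⟨h.nodup_iff.2 (S.sort_nodup _),
      by rw [List.toFinset_eq_of_perm _ _ h, S.sort_toFinset]⟩, fun ⟨hl, hS⟩ => List.perm_of_nodup_nodup_toFinset_eq hl (S.sort_nodup _) ?_⟩
  rw [hS, S.sort_toFinset]

lemma card_orderings (S : Finset ℕ) : #(Orderings S) = (#S)! := by
  rw [Orderings, List.toFinset_card_of_nodup (List.nodup_permutations _ (S.sort_nodup _)),
    List.length_permutations, Finset.length_sort]

lemma filter_mem_orderings {N T : Finset ℕ} (hTN : T ⊆ N) {σ : List ℕ}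
    (hσ : σ ∈ Orderings N) : σ.filter (· ∈ T) ∈ Orderings T := by
  rw [mem_orderings] at hσ ⊢
  refine ⟨hσ.1.filter _, ?_⟩
  ext x
  simp only [List.mem_toFinset, List.mem_filter, decide_eq_true_eq, and_iff_right_iff_imp]
  exact fun hx => List.mem_toFinset.1 (hσ.2 ▸ hTN hx)

lemma List.Perm.exists_perm_map_eq {α : Type*} [DecidableEq α] {l l' : List α} (h : l.Perm l')
    (hl : l.Nodup) : ∃ e : Equiv.Perm α, l.map e = l' ∧ ∀ x ∉ l, e x = x := by
  induction h with
  | nil => exact ⟨1, rfl, fun _ _ => rfl⟩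
  | cons a _ ih =>
    obtain ⟨e, hmap, hfix⟩ := ih (List.nodup_cons.1 hl).2
    refine ⟨e, ?_, fun x hx => hfix x (List.mem_cons_of_mem a |>.mt hx)⟩
    rw [List.map_cons, hmap, hfix a (List.nodup_cons.1 hl).1]
  | swap a b l =>
    obtain ⟨⟨-, hbl⟩, hal, -⟩ := by simpa using hl
    refine ⟨Equiv.swap a b, ?_, fun x hx => ?_⟩
    · suffices l.map (Equiv.swap a b) = l by simp [this]
      exact List.map_congr_left (fun x hx => Equiv.swap_apply_of_ne_of_ne
        (ne_of_mem_of_not_mem hx hal) (ne_of_mem_of_not_mem hx hbl)) |>.trans l.map_id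
    · simp only [List.mem_cons, not_or] at hx
      exact Equiv.swap_apply_of_ne_of_ne hx.2.1 hx.1
  | trans h₁₂ _ ih₁₂ ih₂₃ =>
    obtain ⟨e₁, hmap₁, hfix₁⟩ := ih₁₂ hl
    obtain ⟨e₂, hmap₂, hfix₂⟩ := ih₂₃ (h₁₂.nodup_iff.1 hl)
    refine ⟨e₁.trans e₂, by rw [← hmap₂, ← hmap₁, List.map_map]; rfl, fun x hx => ?_⟩
    rw [Equiv.trans_apply, hfix₁ x hx, hfix₂ x (fun h => hx (h₁₂.mem_iff.2 h))]

lemma Finset.sum_filter_mem_powerset {α M : Type*} [DecidableEq α] [AddCommMonoid M]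
    {s : Finset α} {a : α} (ha : a ∈ s) (f : Finset α → M) :
    ∑ t ∈ s.powerset with a ∈ t, f t = ∑ t ∈ (s.erase a).powerset, f (insert a t) := by
  refine Finset.sum_nbij' (erase · a) (insert a) ?_ ?_ ?_ ?_ (fun t ht => ?_)
  · intro t ht
    simp only [mem_filter, mem_powerset] at ht ⊢
    exact erase_subset_erase a ht.1
  · intro t ht
    simp only [mem_filter, mem_powerset] at ht ⊢
    exact ⟨insert_subset ha (ht.trans (erase_subset a s)), mem_insert_self a t⟩
  · intro t ht
    exact insert_erase (mem_filter.1 ht).2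
  · intro t ht
    exact erase_insert fun h => notMem_erase a s (mem_powerset.1 ht h)
  · rw [insert_erase (mem_filter.1 ht).2]

lemma Equiv.Perm.symm_apply_mem_iff {α : Type*} {e : Equiv.Perm α} {s : Finset α}
    (he : ∀ x, e x ∈ s ↔ x ∈ s) (x : α) : e.symm x ∈ s ↔ x ∈ s := by
  simpa using (he (e.symm x)).symm

section Restriction

variable {N T : Finset ℕ}

lemma map_mem_orderings {e : Equiv.Perm ℕ} (he : ∀ x, e x ∈ N ↔ x ∈ N) {σ : List ℕ}
    (hσ : σ ∈ Orderings N) : σ.map e ∈ Orderings N := by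
  rw [mem_orderings] at hσ ⊢
  refine ⟨hσ.1.map e.injective, ?_⟩
  ext x
  simp only [List.mem_toFinset, List.mem_map, ← Equiv.eq_symm_apply, exists_eq_right]
  rw [← List.mem_toFinset, hσ.2, Equiv.Perm.symm_apply_mem_iff he]

lemma filter_map_perm {e : Equiv.Perm ℕ} (he : ∀ x, e x ∈ T ↔ x ∈ T) (σ : List ℕ) :
    (σ.map e).filter (· ∈ T) = (σ.filter (· ∈ T)).map e := by
  rw [List.filter_map]
  congr 2
  ext x
  simp [he]

lemma exists_perm_map_eq_of_mem_orderings {π π' : List ℕ} (hπ : π ∈ Orderings T)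
    (hπ' : π' ∈ Orderings T) :
    ∃ e : Equiv.Perm ℕ, π.map e = π' ∧ (∀ x, e x ∈ T ↔ x ∈ T) ∧ ∀ x ∉ T, e x = x := by
  rw [mem_orderings] at hπ hπ'
  obtain ⟨e, hmap, hfix⟩ := (List.perm_of_nodup_nodup_toFinset_eq hπ.1 hπ'.1
    (hπ.2.trans hπ'.2.symm)).exists_perm_map_eq hπ.1
  have hfixT : ∀ x ∉ T, e x = x := fun x hx => hfix x (by rwa [← List.mem_toFinset, hπ.2])
  refine ⟨e, hmap, fun x => ?_, hfixT⟩
  by_cases hx : x ∈ T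
  · have hxπ' : e x ∈ π' := hmap ▸ List.mem_map_of_mem (by rwa [← List.mem_toFinset, hπ.2])
    exact iff_of_true (hπ'.2 ▸ List.mem_toFinset.2 hxπ') hx
  · rw [hfixT x hx]

lemma card_filter_restrict_eq (hTN : T ⊆ N) {π π' : List ℕ} (hπ : π ∈ Orderings T)
    (hπ' : π' ∈ Orderings T) :
    #{σ ∈ Orderings N | σ.filter (· ∈ T) = π} = #{σ ∈ Orderings N | σ.filter (· ∈ T) = π'} := by
  obtain ⟨e, hmap, heT, hfix⟩ := exists_perm_map_eq_of_mem_orderings hπ hπ'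
  have heN : ∀ x, e x ∈ N ↔ x ∈ N := fun x => by
    by_cases hx : x ∈ T
    · exact iff_of_true (hTN ((heT x).2 hx)) (hTN hx)
    · rw [hfix x hx]
  have hmap' : π'.map e.symm = π := by rw [← hmap, List.map_map]; simp
  refine Finset.card_nbij' (List.map e) (List.map e.symm) ?_ ?_ ?_ ?_
  · intro σ hσ
    simp only [coe_filter, Set.mem_ofPred_eq] at hσ ⊢
    exact ⟨map_mem_orderings heN hσ.1, by rw [filter_map_perm heT, hσ.2, hmap]⟩
  · intro σ hσ
    simp only [coe_filter, Set.mem_ofPred_eq] at hσ ⊢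
    exact ⟨map_mem_orderings (Equiv.Perm.symm_apply_mem_iff heN) hσ.1,
      by rw [filter_map_perm (Equiv.Perm.symm_apply_mem_iff heT), hσ.2, hmap']⟩
  · exact fun σ _ => by simp
  · exact fun σ _ => by simp

lemma card_filter_restrict_mul_factorial (hTN : T ⊆ N) {π : List ℕ} (hπ : π ∈ Orderings T) :
    #{σ ∈ Orderings N | σ.filter (· ∈ T) = π} * (#T)! = (#N)! := by
  rw [← card_orderings, ← card_orderings N,
    card_eq_sum_card_fiberwise fun σ => filter_mem_orderings (σ := σ) hTN,
    sum_congr rfl fun π' hπ' => card_filter_restrict_eq hTN hπ' hπ, sum_const, smul_eq_mul,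
    mul_comm]

lemma sum_orderings_comp_filter {K : Type*} [Field K] [CharZero K] (hTN : T ⊆ N)
    (f : List ℕ → K) :
    ∑ σ ∈ Orderings N, f (σ.filter (· ∈ T)) = ((#N)! / (#T)! : K) * ∑ π ∈ Orderings T, f π := by
  rw [← sum_fiberwise_of_maps_to fun σ => filter_mem_orderings (σ := σ) hTN, mul_sum]
  refine sum_congr rfl fun π hπ => ?_
  rw [sum_congr rfl fun σ hσ => congrArg f (mem_filter.1 hσ).2, sum_const, nsmul_eq_mul,
    ← card_filter_restrict_mul_factorial hTN hπ, Nat.cast_mul,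
    mul_div_cancel_right₀ _ (Nat.cast_ne_zero.2 (factorial_ne_zero _))]

end Restriction

lemma List.Nodup.erase_filter_mem {σ : List ℕ} (hσ : σ.Nodup) (S : Finset ℕ) (i : ℕ) :
    (σ.filter (· ∈ S)).erase i = σ.filter (· ∈ S.erase i) := by
  rw [(hσ.filter _).erase_eq_filter, List.filter_filter]
  congr 1
  ext a
  by_cases a = i <;> simp_all

lemma extendOrd_mem_orderings {d : ℕ} {π : List ℕ} (hπ : π.Nodup)
    (hπd : π.toFinset ⊆ Icc 1 d) : extendOrd d π ∈ Orderings (Icc 1 d) := by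
  rw [mem_orderings, extendOrd, List.nodup_append, List.toFinset_append, sort_toFinset,
    union_sdiff_of_subset hπd]
  refine ⟨⟨hπ, sort_nodup _ _, fun a ha b hb hab => ?_⟩, rfl⟩
  rw [mem_sort, mem_sdiff, ← hab, List.mem_toFinset] at hb
  exact hb.2 ha

lemma filter_extendOrd (d : ℕ) (π : List ℕ) :
    (extendOrd d π).filter (· ∈ π.toFinset) = π := by
  rw [extendOrd, List.filter_append, List.filter_eq_self.2 (by simp),
    List.filter_eq_nil_iff.2 (by simp), List.append_nil]

def DependsOnlyOnInducedOrder (N : Finset ℕ) (ω : Finset ℕ → List ℕ → ℝ) : Prop :=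
  ∀ S ∈ N.powerset, ∀ σ ∈ Orderings N, ∀ σ' ∈ Orderings N,
    σ.filter (· ∈ S) = σ'.filter (· ∈ S) → ω S σ = ω S σ'

lemma DependsOnlyOnInducedOrder.eq_extendOrd {d : ℕ} {ω : Finset ℕ → List ℕ → ℝ}
    (hω : DependsOnlyOnInducedOrder (Icc 1 d) ω) {S : Finset ℕ} (hS : S ⊆ Icc 1 d)
    {σ : List ℕ} (hσ : σ ∈ Orderings (Icc 1 d)) :
    ω S σ = ω (σ.filter (· ∈ S)).toFinset (extendOrd d (σ.filter (· ∈ S))) := by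
  set π := σ.filter (· ∈ S)
  obtain ⟨hπ, hπS⟩ := mem_orderings.1 (filter_mem_orderings hS hσ)
  have hfilter := filter_extendOrd d π
  rw [hπS] at hfilter ⊢
  exact hω S (mem_powerset.2 hS) σ hσ _ (extendOrd_mem_orderings hπ (hπS ▸ hS)) hfilter.symm

lemma factorial_coeff_mul (d k : ℕ) :
    (((k + 1 - 1)! * (d - (k + 1))! : ℝ) / (d ! * d !)) * (d ! / (k + 1)!) =
      (d - k - 1)! / (d ! * (k + 1)) := by
  rw [Nat.add_sub_cancel, Nat.sub_sub, factorial_succ, Nat.cast_mul]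
  field_simp
  push_cast
  ring

lemma DependsOnlyOnInducedOrder.sum_orderings_sub_erase {d : ℕ} {ω : Finset ℕ → List ℕ → ℝ}
    (hω : DependsOnlyOnInducedOrder (Icc 1 d) ω) {S : Finset ℕ} (hS : S ⊆ Icc 1 d) (i : ℕ) :
    ∑ σ ∈ Orderings (Icc 1 d), (ω S σ - ω (S.erase i) σ) =
      (d ! / (#S)! : ℝ) * ∑ π ∈ Orderings S,
        (ω π.toFinset (extendOrd d π) - ω (π.erase i).toFinset (extendOrd d (π.erase i))) := by
  set g : List ℕ → ℝ :=
    fun π => ω π.toFinset (extendOrd d π) - ω (π.erase i).toFinset (extendOrd d (π.erase i))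
  have hrestrict : ∀ σ ∈ Orderings (Icc 1 d),
      ω S σ - ω (S.erase i) σ = g (σ.filter (· ∈ S)) := by
    intro σ hσ
    rw [hω.eq_extendOrd hS hσ, hω.eq_extendOrd ((erase_subset i S).trans hS) hσ,
      ← (mem_orderings.1 hσ).1.erase_filter_mem]
  rw [sum_congr rfl hrestrict, sum_orderings_comp_filter hS g, Nat.card_Icc, Nat.add_sub_cancel]

/-- OrdShap-VI equals the SB-type sum: if `ω(S,σ)` depends on `σ` only through the
relative order induced on `S`, then
`γ̄_i(ω) = Σ_{S ⊆ N\{i}} Σ_{π ∈ Ord(S∪{i})} (d−|S|−1)!/(d!(|S|+1)) · [ω̃(π) − ω̃(π − i)]`,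
where `ω̃(π)` is the common value of `ω` on the underlying set of `π` and any
permutation of `N` inducing `π`. -/
theorem stmt12 (d i : ℕ) (ω : Finset ℕ → List ℕ → ℝ) (hi : i ∈ Finset.Icc 1 d)
    (hdep : ∀ S ∈ (Finset.Icc 1 d).powerset,
      ∀ σ ∈ Orderings (Finset.Icc 1 d), ∀ σ' ∈ Orderings (Finset.Icc 1 d),
        σ.filter (fun a => decide (a ∈ S)) = σ'.filter (fun a => decide (a ∈ S)) →
          ω S σ = ω S σ') :
    (∑ S ∈ (Finset.Icc 1 d).powerset.filter (fun S => i ∈ S),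
      ∑ σ ∈ Orderings (Finset.Icc 1 d),
        (((S.card - 1)! * (d - S.card)! : ℝ) / (d ! * d !)) *
          (ω S σ - ω (S.erase i) σ)) =
    ∑ S ∈ ((Finset.Icc 1 d).erase i).powerset, ∑ π ∈ Orderings (insert i S),
      (((d - S.card - 1)! : ℝ) / (d ! * (S.card + 1))) *
        (ω π.toFinset (extendOrd d π) -
          ω (π.erase i).toFinset (extendOrd d (π.erase i))) := by
  replace hdep : DependsOnlyOnInducedOrder (Icc 1 d) ω := hdep
  rw [sum_filter_mem_powerset hi]
  refine sum_congr rfl fun S hS => ?_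
  have hSd : S ⊆ Icc 1 d := (mem_powerset.1 hS).trans (erase_subset i _)
  have hiS : i ∉ S := fun h => notMem_erase i _ (mem_powerset.1 hS h)
  rw [← mul_sum, hdep.sum_orderings_sub_erase (insert_subset hi hSd), card_insert_of_notMem hiS,
    ← mul_assoc, factorial_coeff_mul, mul_sum]
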